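/- arXiv:2405.19603 — 8 statements merged into one kernel-verified Lean document; each statement's English description precedes it below -/
import Mathlib

section
/- Let G = (V,E) be a finite simple graph and let g : V → ℝ be locally injective. Then χ(G) = Σ_{v ∈ V} i_g(v), where i_g(v) = 1 − χ(S_g^-(v)) is the Poincaré–Hopf index of g at v. -/
open Finset
open scoped Classical

/-- The cliques of the graph `G` contained in the vertex set `A`
(nonempty sets of pairwise adjacent vertices). -/
noncomputable def cliquesOn {V : Type*} (G : SimpleGraph V) (A : Finset V) :
    Finset (Finset V) :=
  A.powerset.filter (fun s => s.Nonempty ∧ G.IsClique (s : Set V))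

/-- Euler characteristic of the subgraph of `G` induced on `A`:
`χ = Σ_x (−1)^{|x|−1}` over the cliques `x` contained in `A`. -/
noncomputable def eulerCharOn {V : Type*} (G : SimpleGraph V) (A : Finset V) : ℤ :=
  ∑ s ∈ cliquesOn G A, (-1) ^ (s.card - 1)

/-- Euler characteristic of a finite simple graph. -/
noncomputable def eulerChar {V : Type*} [Fintype V] (G : SimpleGraph V) : ℤ :=
  eulerCharOn G Finset.univ

/-- The vertex set of `S_g^-(v)`: the neighbours `w` of `v` with `g w < g v`. -/
noncomputable def sphereMinus {V : Type*} [Fintype V] (G : SimpleGraph V)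
    (g : V → ℝ) (v : V) : Finset V :=
  Finset.univ.filter (fun w => G.Adj v w ∧ g w < g v)

/-!
Since `g` is injective on every clique, each clique `x` has a unique vertex `v` at which `g`
attains its maximum on `x`. Grouping the cliques by this top vertex, the cliques with top `v`
are exactly the sets `insert v y` where `y` is either empty or a clique of `S_g^-(v)`; since
`insert v` raises the cardinality by one, they contribute `1 - χ(S_g^-(v))`.
-/

section Cliques

variable {V : Type*} (G : SimpleGraph V)

@[simp]
lemma mem_cliquesOn {A s : Finset V} :
    s ∈ cliquesOn G A ↔ s ⊆ A ∧ s.Nonempty ∧ G.IsClique (s : Set V) := by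
  simp [cliquesOn]

lemma mem_insert_empty_cliquesOn {A s : Finset V} :
    s ∈ insert ∅ (cliquesOn G A) ↔ s ⊆ A ∧ G.IsClique (s : Set V) := by
  rcases s.eq_empty_or_nonempty with rfl | hs
  · simp
  · simp [hs, hs.ne_empty]

lemma sum_cliquesOn_neg_one_pow_card (A : Finset V) :
    ∑ s ∈ cliquesOn G A, (-1 : ℤ) ^ s.card = -eulerCharOn G A := by
  rw [eulerCharOn, ← sum_neg_distrib]
  refine sum_congr rfl fun s hs => ?_
  obtain ⟨n, hn⟩ := Nat.exists_eq_add_one_of_ne_zero ((mem_cliquesOn G).1 hs).2.1.card_pos.ne'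
  rw [hn, pow_succ, Nat.add_sub_cancel]
  ring

variable [Fintype V] (g : V → ℝ)

noncomputable def cliquesWithTop (v : V) : Finset (Finset V) :=
  (cliquesOn G univ).filter fun x => v ∈ x ∧ ∀ w ∈ x, g w ≤ g v

lemma biUnion_cliquesWithTop : univ.biUnion (cliquesWithTop G g) = cliquesOn G univ := by
  ext x
  simp only [mem_biUnion, mem_univ, true_and, cliquesWithTop, mem_filter]
  refine ⟨fun ⟨_, hx, _⟩ => hx, fun hx => ?_⟩
  obtain ⟨v, hv, hmax⟩ := x.exists_max_image g ((mem_cliquesOn G).1 hx).2.1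
  exact ⟨v, hx, hv, hmax⟩

lemma pairwiseDisjoint_cliquesWithTop (hg : ∀ v w : V, G.Adj v w → g v ≠ g w) :
    ((univ : Finset V) : Set V).PairwiseDisjoint (cliquesWithTop G g) := by
  intro u _ v _ huv
  refine disjoint_left.2 fun x hxu hxv => ?_
  simp only [cliquesWithTop, mem_filter, mem_cliquesOn] at hxu hxv
  obtain ⟨⟨-, -, hx⟩, hu, hu_max⟩ := hxu
  obtain ⟨-, hv, hv_max⟩ := hxv
  exact hg u v (hx hu hv huv) (le_antisymm (hv_max u hu) (hu_max v hv))

lemma eulerChar_eq_sum_cliquesWithTop (hg : ∀ v w : V, G.Adj v w → g v ≠ g w) :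
    eulerChar G = ∑ v, ∑ x ∈ cliquesWithTop G g v, (-1 : ℤ) ^ (x.card - 1) := by
  rw [eulerChar, eulerCharOn, ← biUnion_cliquesWithTop G g,
    sum_biUnion (pairwiseDisjoint_cliquesWithTop G g hg)]

@[simp]
lemma mem_sphereMinus {v w : V} : w ∈ sphereMinus G g v ↔ G.Adj v w ∧ g w < g v := by
  simp [sphereMinus]

lemma notMem_sphereMinus (v : V) : v ∉ sphereMinus G g v := by
  simp

lemma insert_mem_cliquesWithTop_iff (hg : ∀ v w : V, G.Adj v w → g v ≠ g w) {v : V}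
    {s : Finset V} (hv : v ∉ s) :
    insert v s ∈ cliquesWithTop G g v ↔ s ⊆ sphereMinus G g v ∧ G.IsClique (s : Set V) := by
  simp only [cliquesWithTop, mem_filter, mem_cliquesOn, coe_insert, G.isClique_insert,
    insert_nonempty, mem_insert, forall_eq_or_imp, le_refl, true_and, subset_iff,
    mem_sphereMinus, mem_coe, mem_univ, true_or, implies_true]
  constructor
  · rintro ⟨⟨hs, hadj⟩, hle⟩
    refine ⟨fun w hw => ?_, hs⟩
    have hvw : G.Adj v w := hadj w hw (ne_of_mem_of_not_mem hw hv).symm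
    exact ⟨hvw, (hle w hw).lt_of_ne (hg v w hvw).symm⟩
  · rintro ⟨hsph, hs⟩
    exact ⟨⟨hs, fun w hw _ => (hsph hw).1⟩, fun w hw => (hsph hw).2.le⟩

lemma sum_cliquesWithTop (hg : ∀ v w : V, G.Adj v w → g v ≠ g w) (v : V) :
    ∑ x ∈ cliquesWithTop G g v, (-1 : ℤ) ^ (x.card - 1) =
      1 - eulerCharOn G (sphereMinus G g v) := by
  have hv_notMem {s : Finset V} (hs : s ∈ insert ∅ (cliquesOn G (sphereMinus G g v))) : v ∉ s :=
    fun h => notMem_sphereMinus G g v (((mem_insert_empty_cliquesOn G).1 hs).1 h)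
  have hv_mem {x : Finset V} (hx : x ∈ cliquesWithTop G g v) : v ∈ x := (mem_filter.1 hx).2.1
  calc ∑ x ∈ cliquesWithTop G g v, (-1 : ℤ) ^ (x.card - 1)
      = ∑ s ∈ insert ∅ (cliquesOn G (sphereMinus G g v)), (-1 : ℤ) ^ s.card := by
        refine sum_nbij' (fun x => x.erase v) (insert v) (fun x hx => ?_) (fun s hs => ?_)
          (fun x hx => insert_erase (hv_mem hx)) (fun s hs => erase_insert (hv_notMem hs))
          (fun x hx => by rw [card_erase_of_mem (hv_mem hx)])
        · rw [← insert_erase (hv_mem hx), insert_mem_cliquesWithTop_iff G g hg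
            (notMem_erase v x)] at hx
          exact (mem_insert_empty_cliquesOn G).2 hx
        · exact (insert_mem_cliquesWithTop_iff G g hg (hv_notMem hs)).2
            ((mem_insert_empty_cliquesOn G).1 hs)
    _ = 1 - eulerCharOn G (sphereMinus G g v) := by
        rw [sum_insert (by simp), sum_cliquesOn_neg_one_pow_card, card_empty, pow_zero,
          sub_eq_add_neg]

end Cliques

/-- Poincaré–Hopf: for a locally injective function `g` on a finite simple graph `G`,
`χ(G) = Σ_v i_g(v)` where `i_g(v) = 1 − χ(S_g^-(v))`. -/
theorem poincare_hopf {V : Type*} [Fintype V] (G : SimpleGraph V) (g : V → ℝ)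
    (hg : ∀ v w : V, G.Adj v w → g v ≠ g w) :
    eulerChar G = ∑ v : V, (1 - eulerCharOn G (sphereMinus G g v)) := by
  rw [eulerChar_eq_sum_cliquesWithTop G g hg]
  exact sum_congr rfl fun v _ => sum_cliquesWithTop G g hg v
end

section
/- Let G = (V,E) be a finite simple graph equipped with an orientation of each edge (for each edge exactly one of the two directions is chosen) such that no clique of G contains a directed cycle. Then on each clique x the orientation restricted to x is a transitive tournament, so x has a unique top vertex F(x) ∈ x (the vertex w ∈ x such that every other vertex of x has its edge to w directed towards w). Defining i(v) = Σ_{x clique of G with F(x) = v} (−1)^{|x|−1}, one has Σ_{v ∈ V} i(v) = χ(G). -/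
/-!
On a clique the orientation is asymmetric and total, and since a clique contains no directed
triangle it is also transitive: it is a strict total order, whose maximum is the unique top
vertex. Once every clique has its top vertex, `Σ_v i(v)` merely regroups the sum defining `χ(G)`
according to the top vertex of each clique.
-/

open Finset
open scoped Classical

section Tournament

variable {V : Type*} {D : V → V → Prop}

theorem Finset.exists_forall_rel_of_total_of_trans {x : Finset V}
    (htot : ∀ u ∈ x, ∀ v ∈ x, u ≠ v → D u v ∨ D v u)
    (htrans : ∀ a ∈ x, ∀ b ∈ x, ∀ c ∈ x, D a b → D b c → D a c) (hne : x.Nonempty) :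
    ∃ w ∈ x, ∀ u ∈ x, u ≠ w → D u w := by
  induction hne using Finset.Nonempty.cons_induction with
  | singleton a => exact ⟨a, mem_singleton_self a, fun u hu hne => (hne (mem_singleton.1 hu)).elim⟩
  | cons a s ha _ ih =>
    have hs_sub : ∀ {u}, u ∈ s → u ∈ s.cons a ha := mem_cons_of_mem
    obtain ⟨w, hw, hwtop⟩ := ih (fun u hu v hv => htot u (hs_sub hu) v (hs_sub hv))
      (fun a ha b hb c hc => htrans a (hs_sub ha) b (hs_sub hb) c (hs_sub hc))
    have haw : a ≠ w := fun h => ha (h ▸ hw)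
    rcases htot a (mem_cons_self a s) w (hs_sub hw) haw with hDaw | hDwa
    · refine ⟨w, hs_sub hw, fun u hu huw => ?_⟩
      rcases mem_cons.1 hu with rfl | hu
      exacts [hDaw, hwtop u hu huw]
    · refine ⟨a, mem_cons_self a s, fun u hu hua => ?_⟩
      rcases mem_cons.1 hu with rfl | hu
      · exact (hua rfl).elim
      rcases eq_or_ne u w with rfl | huw
      · exact hDwa
      · exact htrans u (hs_sub hu) w (hs_sub hw) a (mem_cons_self a s) (hwtop u hu huw) hDwa

section Orientation

variable {G : SimpleGraph V} {x : Finset V}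
  (hDadj : ∀ v w : V, D v w → G.Adj v w) (hDor : ∀ v w : V, G.Adj v w → (D v w ↔ ¬ D w v))
include hDadj hDor

theorem orientation_asymm {a b : V} (hab : D a b) : ¬ D b a :=
  (hDor a b (hDadj a b hab)).1 hab

omit hDadj in
theorem orientation_total_of_isClique (hx : G.IsClique (x : Set V)) :
    ∀ u ∈ x, ∀ v ∈ x, u ≠ v → D u v ∨ D v u := fun u hu v hv huv =>
  or_iff_not_imp_right.2 (hDor u v (hx (mem_coe.2 hu) (mem_coe.2 hv) huv)).2

theorem orientation_trans_of_isClique (hx : G.IsClique (x : Set V))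
    (hacyc : ¬ ∃ (n : ℕ) (c : Fin (n + 1) → V), (∀ i, c i ∈ x) ∧
      (∀ i : Fin n, D (c i.castSucc) (c i.succ)) ∧ D (c (Fin.last n)) (c 0)) :
    ∀ a ∈ x, ∀ b ∈ x, ∀ c ∈ x, D a b → D b c → D a c := by
  intro a ha b hb c hc hab hbc
  have hac : a ≠ c := by
    rintro rfl
    exact orientation_asymm hDadj hDor hab hbc
  refine (orientation_total_of_isClique hDor hx a ha c hc hac).resolve_right fun hca => hacyc ?_
  refine ⟨2, ![a, b, c], fun i => ?_, fun i => ?_, hca⟩ <;> fin_cases i <;> assumption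

end Orientation

end Tournament

/-- Poincaré–Hopf for digraphs: let `D` be an orientation of the edges of `G`
(each edge gets exactly one direction) such that no clique contains a directed
cycle.  Then each clique carries a transitive tournament, hence has a unique top
vertex; and for any choice `F` of top vertices, the indices
`i(v) = Σ_{F(x)=v} (−1)^{|x|−1}` sum up to `χ(G)`. -/
theorem poincare_hopf_digraph {V : Type*} [Fintype V] (G : SimpleGraph V)
    (D : V → V → Prop)
    (hDadj : ∀ v w : V, D v w → G.Adj v w)
    (hDor : ∀ v w : V, G.Adj v w → (D v w ↔ ¬ D w v))
    (hacyc : ∀ x ∈ cliquesOn G Finset.univ,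
      ¬ ∃ (n : ℕ) (c : Fin (n + 1) → V), (∀ i, c i ∈ x) ∧
        (∀ i : Fin n, D (c i.castSucc) (c i.succ)) ∧ D (c (Fin.last n)) (c 0)) :
    (∀ x ∈ cliquesOn G Finset.univ,
        ∃! w, w ∈ x ∧ ∀ u ∈ x, u ≠ w → D u w) ∧
    ∀ F : Finset V → V,
      (∀ x ∈ cliquesOn G Finset.univ, F x ∈ x ∧ ∀ u ∈ x, u ≠ F x → D u (F x)) →
      ∑ v : V, ∑ x ∈ (cliquesOn G Finset.univ).filter (fun x => F x = v),
          ((-1 : ℤ) ^ (x.card - 1)) = eulerChar G := by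
  refine ⟨fun x hx => ?_, fun F _ => sum_fiberwise_of_maps_to (fun x _ => mem_univ (F x)) _⟩
  obtain ⟨-, hne, hclique⟩ := by simpa only [cliquesOn, mem_filter, mem_powerset] using hx
  obtain ⟨w, hw, hwtop⟩ := exists_forall_rel_of_total_of_trans
    (orientation_total_of_isClique hDor hclique)
    (orientation_trans_of_isClique hDadj hDor hclique (hacyc x hx)) hne
  refine ⟨w, ⟨hw, hwtop⟩, fun w' ⟨hw', hw'top⟩ => by_contra fun hne' => ?_⟩
  exact orientation_asymm hDadj hDor (hwtop w' hw' hne') (hw'top w hw (Ne.symm hne'))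
end

section
/- For all finite simple graphs G and H, the augmented inductive dimension is additive under the Zykov join: dim⁺(G ⊕ H) = dim⁺(G) + dim⁺(H). -/
open Finset
open scoped Classical

/-- Inductive dimension of the subgraph of `G` induced on the vertex set `A`:
`dim ∅ = −1` and `dim A = 1 + (1/|A|) Σ_{v ∈ A} dim (S(v))`, where `S(v)` is the
unit sphere of `v` inside `A` (the neighbours of `v` lying in `A`). -/
noncomputable def indDim {V : Type*} (G : SimpleGraph V) : Finset V → ℚ
  | A =>
    if h : A = ∅ then -1
    else 1 + (A.card : ℚ)⁻¹ *
      ∑ v ∈ A.attach, indDim G (A.filter (fun w => G.Adj v.1 w))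
termination_by A => A.card
decreasing_by
  apply Finset.card_lt_card
  rw [Finset.ssubset_iff_of_subset (Finset.filter_subset _ _)]
  exact ⟨v.1, v.2, fun hmem => G.irrefl (Finset.mem_filter.mp hmem).2⟩

/-- The inductive dimension of a finite simple graph. -/
noncomputable def graphDim {V : Type*} [Fintype V] (G : SimpleGraph V) : ℚ :=
  indDim G Finset.univ

/-- The Zykov join of two finite simple graphs: all of `G`, all of `H`, and all
edges between a vertex of `G` and a vertex of `H`. -/
def zykovJoin {V W : Type*} (G : SimpleGraph V) (H : SimpleGraph W) :
    SimpleGraph (V ⊕ W) where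
  Adj a b :=
    match a, b with
    | Sum.inl v, Sum.inl w => G.Adj v w
    | Sum.inr v, Sum.inr w => H.Adj v w
    | Sum.inl _, Sum.inr _ => True
    | Sum.inr _, Sum.inl _ => True
  symm := by
    constructor
    rintro (v | v) (w | w) h
    · exact G.adj_symm h
    · trivial
    · trivial
    · exact H.adj_symm h
  loopless := by
    constructor
    rintro (v | v) h
    · exact G.irrefl h
    · exact H.irrefl h

/-! The vertices of `G ⊕ H` adjacent to a vertex of `G` are its neighbours in `G` together with all
of `H`. Hence the unit spheres of the join are joins of smaller vertex sets, and an induction on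
the number of vertices shows that `1 + dim` adds over joins of arbitrary induced subgraphs: the
sum of sphere dimensions splits into a `G`-part and an `H`-part, and the recursion in the form
`|A| (dim A - 1) = Σ_{v ∈ A} dim S(v)` evaluates each of them. -/

section IndDim

variable {V : Type*} (G : SimpleGraph V)

theorem indDim_empty : indDim G ∅ = -1 := by
  rw [indDim, dif_pos rfl]

theorem card_mul_indDim_sub_one (A : Finset V) :
    A.card * (indDim G A - 1) = ∑ v ∈ A, indDim G (A.filter (G.Adj v)) := by
  rcases A.eq_empty_or_nonempty with rfl | hA
  · simp
  · rw [indDim, dif_neg hA.ne_empty, add_sub_cancel_left, ← mul_assoc,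
      mul_inv_cancel₀ (by exact_mod_cast hA.card_pos.ne'), one_mul]
    exact Finset.sum_attach A fun v => indDim G (A.filter (G.Adj v))

theorem card_filter_adj_lt {A : Finset V} {v : V} (hv : v ∈ A) :
    (A.filter (G.Adj v)).card < A.card :=
  Finset.card_lt_card <| Finset.filter_ssubset.mpr ⟨v, hv, G.irrefl⟩

end IndDim

section ZykovJoin

variable {V W : Type*} (G : SimpleGraph V) (H : SimpleGraph W)

theorem filter_zykovJoin_adj_inl (A : Finset V) (B : Finset W) (v : V) :
    (A.disjSum B).filter ((zykovJoin G H).Adj (.inl v)) = (A.filter (G.Adj v)).disjSum B := by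
  ext (u | u) <;> rw [Finset.mem_filter] <;> simp [zykovJoin]

theorem filter_zykovJoin_adj_inr (A : Finset V) (B : Finset W) (w : W) :
    (A.disjSum B).filter ((zykovJoin G H).Adj (.inr w)) = A.disjSum (B.filter (H.Adj w)) := by
  ext (u | u) <;> rw [Finset.mem_filter] <;> simp [zykovJoin]

theorem indDim_zykovJoin_disjSum (A : Finset V) (B : Finset W) :
    indDim (zykovJoin G H) (A.disjSum B) = 1 + indDim G A + indDim H B := by
  rcases (A.disjSum B).eq_empty_or_nonempty with hAB | hAB
  · obtain ⟨rfl, rfl⟩ := Finset.disjSum_eq_empty.mp hAB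
    simp only [hAB, indDim_empty]
    norm_num
  have sphere_inl (v : V) (hv : v ∈ A) :
      indDim (zykovJoin G H) ((A.disjSum B).filter ((zykovJoin G H).Adj (.inl v)))
        = 1 + indDim G (A.filter (G.Adj v)) + indDim H B := by
    have := card_filter_adj_lt G hv
    rw [filter_zykovJoin_adj_inl, indDim_zykovJoin_disjSum]
  have sphere_inr (w : W) (hw : w ∈ B) :
      indDim (zykovJoin G H) ((A.disjSum B).filter ((zykovJoin G H).Adj (.inr w)))
        = 1 + indDim G A + indDim H (B.filter (H.Adj w)) := by
    have := card_filter_adj_lt H hw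
    rw [filter_zykovJoin_adj_inr, indDim_zykovJoin_disjSum]
  have hcard : ((A.disjSum B).card : ℚ) ≠ 0 := by exact_mod_cast hAB.card_pos.ne'
  have key : ((A.disjSum B).card : ℚ) * (indDim (zykovJoin G H) (A.disjSum B) - 1)
      = (A.disjSum B).card * (indDim G A + indDim H B) := by
    rw [card_mul_indDim_sub_one, Finset.sum_disjSum, Finset.sum_congr rfl sphere_inl,
      Finset.sum_congr rfl sphere_inr]
    simp only [Finset.sum_add_distrib, Finset.sum_const, nsmul_eq_mul,
      ← card_mul_indDim_sub_one, Finset.card_disjSum, Nat.cast_add]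
    ring
  linarith [mul_left_cancel₀ hcard key]
termination_by A.card + B.card

end ZykovJoin

/-- The augmented inductive dimension `dim⁺ = 1 + dim` is additive for the
Zykov join: `dim⁺(G ⊕ H) = dim⁺(G) + dim⁺(H)`. -/
theorem augmented_dim_join {V W : Type*} [Fintype V] [Fintype W]
    (G : SimpleGraph V) (H : SimpleGraph W) :
    1 + graphDim (zykovJoin G H) = (1 + graphDim G) + (1 + graphDim H) := by
  rw [graphDim, graphDim, graphDim, ← Finset.univ_disjSum_univ, indDim_zykovJoin_disjSum]
  ring
end

section
/- For every d ≥ 0, no d-sphere is contractible; consequently, for every d ≥ 1, no discrete d-manifold is contractible. -/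
/-!
The reduced Euler characteristic `χ̃` of the clique complex satisfies the excision formula
`χ̃(G) = χ̃(G \ v) - χ̃(S(v))`, since the cliques through `v` are the cones over the cliques of
`S(v)`. By induction along the defining recursions, `χ̃ = 0` for contractible graphs and
`χ̃ = (-1)^d` for `d`-spheres, so no sphere is contractible. A contractible manifold would have
either an empty unit sphere (impossible in dimension `d ≥ 1`) or a unit sphere that is both a
sphere and contractible.
-/

open Finset
open scoped Classical

/-- Contractibility of the subgraph of `G` induced on the vertex set `A`. -/
inductive IsContractible {V : Type*} (G : SimpleGraph V) : Finset V → Prop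
  | single (v : V) : IsContractible G {v}
  | step {A : Finset V} (v : V) (hv : v ∈ A)
      (hS : IsContractible G (A.filter (fun w => G.Adj v w)))
      (hrest : IsContractible G (A.erase v)) : IsContractible G A

/-- `IsSphere G d A` : the subgraph of `G` induced on `A` is a `d`-sphere. -/
inductive IsSphere {V : Type*} (G : SimpleGraph V) : ℤ → Finset V → Prop
  | empty : IsSphere G (-1) ∅
  | succ {d : ℤ} {A : Finset V} (hd : 0 ≤ d)
      (hS : ∀ v ∈ A, IsSphere G (d - 1) (A.filter (fun w => G.Adj v w)))
      (hv : ∃ v ∈ A, IsContractible G (A.erase v)) : IsSphere G d A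

/-- The sum runs over all cliques of `G[A]`, the empty one included, so that it equals
`χ(A) - 1`. -/
noncomputable def reducedEulerChar {V : Type*} (G : SimpleGraph V) (A : Finset V) : ℤ :=
  ∑ S ∈ A.powerset.filter (fun S : Finset V => G.IsClique (S : Set V)), -(-1) ^ S.card

section

variable {V : Type*} {G : SimpleGraph V}

lemma reducedEulerChar_eq_ite_sum (A : Finset V) :
    reducedEulerChar G A =
      ∑ S ∈ A.powerset, if G.IsClique (S : Set V) then -(-1) ^ S.card else 0 :=
  sum_filter _ _

lemma isClique_insert_iff_subset_filter_adj {v : V} {A t : Finset V} (hvt : v ∉ t)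
    (htA : t ⊆ A) :
    G.IsClique ((insert v t : Finset V) : Set V) ↔
      G.IsClique (t : Set V) ∧ t ⊆ A.filter (G.Adj v) := by
  rw [coe_insert, G.isClique_insert_of_notMem (by simpa using hvt)]
  exact and_congr_right fun _ => ⟨fun h w hw => mem_filter.2 ⟨htA hw, h w hw⟩,
    fun h w hw => (mem_filter.1 (h hw)).2⟩

lemma reducedEulerChar_eq_sub_of_mem {A : Finset V} {v : V} (hv : v ∈ A) :
    reducedEulerChar G A =
      reducedEulerChar G (A.erase v) - reducedEulerChar G (A.filter (G.Adj v)) := by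
  have hnbhd : A.filter (G.Adj v) ⊆ A.erase v := fun w hw =>
    mem_erase.2 ⟨fun h => G.loopless.irrefl v (h ▸ (mem_filter.1 hw).2), (mem_filter.1 hw).1⟩
  have hcones : ∑ t ∈ (A.erase v).powerset,
      (if G.IsClique ((insert v t : Finset V) : Set V) then -(-1) ^ (insert v t).card else 0) =
      -reducedEulerChar G (A.filter (G.Adj v)) := by
    rw [reducedEulerChar_eq_ite_sum, ← sum_neg_distrib]
    have hpow : (A.filter (G.Adj v)).powerset =
        (A.erase v).powerset.filter (· ⊆ A.filter (G.Adj v)) := by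
      ext t; simpa using fun h => h.trans hnbhd
    rw [hpow, sum_filter]
    refine sum_congr rfl fun t ht => ?_
    have hvt : v ∉ t := fun h => (notMem_erase v A) (mem_powerset.1 ht h)
    simp only [isClique_insert_iff_subset_filter_adj hvt
      ((mem_powerset.1 ht).trans (erase_subset v A)), card_insert_of_notMem hvt, pow_succ]
    split_ifs <;> simp_all
  conv_lhs => rw [reducedEulerChar_eq_ite_sum, ← insert_erase hv,
    sum_powerset_insert (notMem_erase v A), ← reducedEulerChar_eq_ite_sum, hcones]
  rw [sub_eq_add_neg]

lemma filter_adj_singleton_self (v : V) : ({v} : Finset V).filter (G.Adj v) = ∅ := by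
  simp [filter_singleton]

lemma IsContractible.reducedEulerChar_eq_zero {A : Finset V} (h : IsContractible G A) :
    reducedEulerChar G A = 0 := by
  induction h with
  | single v =>
    rw [reducedEulerChar_eq_sub_of_mem (mem_singleton_self v), erase_singleton,
      filter_adj_singleton_self, sub_self]
  | step v hv _ _ ihS ihrest => rw [reducedEulerChar_eq_sub_of_mem hv, ihS, ihrest, sub_self]

lemma IsSphere.reducedEulerChar_eq {d : ℤ} {A : Finset V} (h : IsSphere G d A) :
    reducedEulerChar G A = d.negOnePow := by
  induction h with
  | empty => simp [reducedEulerChar, filter_singleton]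
  | @succ d A _ _ hcon ihS =>
    obtain ⟨v, hv, hrest⟩ := hcon
    rw [reducedEulerChar_eq_sub_of_mem hv, hrest.reducedEulerChar_eq_zero, ihS v hv,
      Int.negOnePow_sub, Int.negOnePow_one]
    simp

lemma IsSphere.not_isContractible {d : ℤ} {A : Finset V} (h : IsSphere G d A) :
    ¬ IsContractible G A := fun hcon => by
  have := h.reducedEulerChar_eq
  rw [hcon.reducedEulerChar_eq_zero] at this
  exact Units.ne_zero _ this.symm

lemma IsSphere.eq_neg_one_of_empty {d : ℤ} (h : IsSphere G d (∅ : Finset V)) : d = -1 := by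
  cases h with
  | empty => rfl
  | succ _ _ hv => simp at hv

end

theorem sphere_and_manifold_not_contractible_general {V : Type*} :
    (∀ (d : ℤ), 0 ≤ d → ∀ (G : SimpleGraph V) (A : Finset V),
      IsSphere G d A → ¬ IsContractible G A) ∧
    (∀ (d : ℤ), 1 ≤ d → ∀ (G : SimpleGraph V) (A : Finset V), A.Nonempty →
      (∀ v ∈ A, IsSphere G (d - 1) (A.filter (fun w => G.Adj v w))) →
      ¬ IsContractible G A) := by
  refine ⟨fun d _ G A hsph => hsph.not_isContractible, fun d hd G A _ hunit hcon => ?_⟩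
  cases hcon with
  | single v =>
    have hempty := hunit v (mem_singleton_self v)
    rw [filter_adj_singleton_self] at hempty
    linarith [hempty.eq_neg_one_of_empty]
  | step v hv hS _ => exact (hunit v hv).not_isContractible hS

/-- For every `d ≥ 0`, no `d`-sphere is contractible; consequently, for every
`d ≥ 1`, no discrete `d`-manifold (a nonempty graph in which every unit sphere
is a `(d−1)`-sphere) is contractible. -/
theorem sphere_and_manifold_not_contractible {V : Type*} [Fintype V] :
    (∀ (d : ℤ), 0 ≤ d → ∀ (G : SimpleGraph V) (A : Finset V),
      IsSphere G d A → ¬ IsContractible G A) ∧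
    (∀ (d : ℤ), 1 ≤ d → ∀ (G : SimpleGraph V) (A : Finset V), A.Nonempty →
      (∀ v ∈ A, IsSphere G (d - 1) (A.filter (fun w => G.Adj v w))) →
      ¬ IsContractible G A) :=
  sphere_and_manifold_not_contractible_general
end

section
/- For every finite simple graph G, the Euler characteristic of the Barycentric refinement of G equals the Euler characteristic of G: χ(G₁) = χ(G). -/
open Finset
open scoped Classical

/-- The Barycentric refinement of `G`: vertices are the cliques of `G`, and two
cliques are adjacent iff one is a proper subset of the other. -/
def barycentric {V : Type*} (G : SimpleGraph V) :
    SimpleGraph {s : Finset V // s.Nonempty ∧ G.IsClique (s : Set V)} where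
  Adj x y := x.1 ⊂ y.1 ∨ y.1 ⊂ x.1
  symm := by
    constructor
    intro x y h
    exact h.symm
  loopless := by
    constructor
    intro x h
    rcases h with h | h <;> exact ssubset_irrefl _ h

/-!
Both sides are sums over chains. A clique of `G₁` is a nonempty chain of cliques of `G`, so
`χ(G₁)` is the Euler characteristic of the order complex of the clique poset. Grouping the chains
by their largest element `s`, the chains topped by `s` contribute `1 - χ` of the order complex of
the proper nonempty faces of `s`, i.e. of the boundary of the simplex `s`; an induction on `s`,
using the recursion again and `∑_{t ⊆ s} (-1)^|t| = 0`, shows this is `(-1)^(|s| - 1)`, the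
contribution of `s` to `χ(G)`.
-/

lemma neg_one_pow_sub_one {n : ℕ} (hn : n ≠ 0) : (-1 : ℤ) ^ (n - 1) = -(-1) ^ n := by
  obtain ⟨k, rfl⟩ := Nat.exists_eq_succ_of_ne_zero hn
  simp [pow_succ]

lemma Finset.Ioo_filter_lt_of_le {α : Type*} [PartialOrder α] [LocallyFiniteOrder α]
    [DecidableLT α] {a b c : α} (h : c ≤ b) : {x ∈ Ioo a b | x < c} = Ioo a c := by
  ext x
  simp only [mem_filter, mem_Ioo]
  exact ⟨fun ⟨⟨hax, _⟩, hxc⟩ => ⟨hax, hxc⟩, fun ⟨hax, hxc⟩ => ⟨⟨hax, hxc.trans_le h⟩, hxc⟩⟩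

lemma Finset.sum_Ioo_empty_neg_one_pow_card {V : Type*} [DecidableEq V] {s : Finset V}
    (hs : s.Nonempty) :
    ∑ t ∈ Ioo ∅ s, (-1 : ℤ) ^ t.card = -1 - (-1) ^ s.card := by
  have hsum := sum_powerset_neg_one_pow_card_of_nonempty hs
  rw [← Iic_eq_powerset, ← Icc_bot, bot_eq_empty, Icc_eq_cons_Ioc (empty_subset s), sum_cons,
    Ioc_eq_cons_Ioo (empty_ssubset.2 hs), sum_cons] at hsum
  simp only [card_empty, pow_zero] at hsum
  linarith

lemma IsChain.exists_isGreatest {α : Type*} [PartialOrder α] {C : Finset α}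
    (hC : IsChain (· ≤ ·) (C : Set α)) (hne : C.Nonempty) : ∃ m, IsGreatest (C : Set α) m := by
  obtain ⟨m, hm⟩ := C.exists_maximal hne
  refine ⟨m, hm.prop, fun a ha => ?_⟩
  rcases eq_or_ne a m with rfl | ham
  · exact le_rfl
  · exact (hC ha hm.prop ham).elim id (hm.le_of_ge ha)

section OrderComplex

variable {α β : Type*} [PartialOrder α] [PartialOrder β]

noncomputable def orderComplexEulerChar (S : Finset α) : ℤ :=
  ∑ C ∈ S.powerset.filter (fun C : Finset α => C.Nonempty ∧ IsChain (· ≤ ·) (C : Set α)),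
    (-1) ^ (C.card - 1)

lemma sum_isChain_neg_one_pow_card (S : Finset α) :
    ∑ C ∈ S.powerset.filter (fun C : Finset α => IsChain (· ≤ ·) (C : Set α)), (-1 : ℤ) ^ C.card
      = 1 - orderComplexEulerChar S := by
  have hsplit : S.powerset.filter (fun C : Finset α => IsChain (· ≤ ·) (C : Set α))
      = insert ∅
          (S.powerset.filter fun C : Finset α => C.Nonempty ∧ IsChain (· ≤ ·) (C : Set α)) := by
    ext C
    rcases C.eq_empty_or_nonempty with rfl | hC
    · simp
    · simp [hC, hC.ne_empty]
  rw [hsplit, sum_insert (by simp), orderComplexEulerChar, sub_eq_add_neg, ← sum_neg_distrib]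
  refine congrArg _ (sum_congr rfl fun C hC => ?_)
  rw [neg_one_pow_sub_one (mem_filter.1 hC).2.1.card_ne_zero, neg_neg]


lemma isGreatest_insert_of_forall_lt {s : α} {C : Finset α} (h : ∀ a ∈ C, a < s) :
    IsGreatest (↑(insert s C) : Set α) s := by
  rw [coe_insert]
  exact ⟨Set.mem_insert s _, fun a ha => ha.elim le_of_eq fun ha => (h a ha).le⟩

theorem orderComplexEulerChar_eq_sum [DecidableLT α] (S : Finset α) :
    orderComplexEulerChar S = ∑ s ∈ S, (1 - orderComplexEulerChar (S.filter (· < s))) := by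
  simp only [← sum_isChain_neg_one_pow_card]
  rw [orderComplexEulerChar, sum_sigma']
  symm
  refine sum_bij (fun x _ => insert x.1 x.2) ?_ ?_ ?_ ?_
  · rintro ⟨s, C⟩ hsC
    simp only [mem_sigma, mem_filter, mem_powerset, subset_iff, imp_and, forall_and] at hsC ⊢
    obtain ⟨hs, ⟨hCS, hCs⟩, hC⟩ := hsC
    refine ⟨insert_subset hs hCS, insert_nonempty _ _, ?_⟩
    rw [coe_insert]
    exact hC.insert fun b hb _ => Or.inr (hCs b hb).le
  · rintro ⟨s, C⟩ hsC ⟨t, D⟩ htD hCD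
    simp only [mem_sigma, mem_filter, mem_powerset, subset_iff, imp_and, forall_and] at hsC htD
    obtain ⟨-, ⟨-, hCs⟩, -⟩ := hsC
    obtain ⟨-, ⟨-, hDt⟩, -⟩ := htD
    obtain rfl : s = t :=
      (isGreatest_insert_of_forall_lt hCs).unique (hCD ▸ isGreatest_insert_of_forall_lt hDt)
    have hC : C = D := by
      rw [← erase_insert fun h => (hCs s h).false, hCD, erase_insert fun h => (hDt s h).false]
    rw [hC]
  · intro C hC
    obtain ⟨hCS, hne, hch⟩ := by simpa only [mem_filter, mem_powerset] using hC
    obtain ⟨m, hmC, hm⟩ := hch.exists_isGreatest hne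
    refine ⟨⟨m, C.erase m⟩, ?_, insert_erase hmC⟩
    simp only [mem_sigma, mem_filter, mem_powerset, subset_iff, imp_and, forall_and]
    refine ⟨hCS hmC, ⟨(erase_subset m C).trans hCS, fun a ha => ?_⟩, hch.mono (by simp)⟩
    exact lt_of_le_of_ne (hm (mem_of_mem_erase ha)) (ne_of_mem_erase ha)
  · rintro ⟨s, C⟩ hsC
    simp only [mem_sigma, mem_filter, mem_powerset, subset_iff, imp_and, forall_and] at hsC
    obtain ⟨-, ⟨-, hCs⟩, -⟩ := hsC
    rw [card_insert_of_notMem fun h => (hCs s h).false, Nat.add_sub_cancel]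

theorem orderComplexEulerChar_map (f : α ↪o β) (A : Finset α) :
    orderComplexEulerChar (A.map f.toEmbedding) = orderComplexEulerChar A := by
  have hchain (C : Finset α) : IsChain (· ≤ ·) (f '' C) ↔ IsChain (· ≤ ·) (C : Set α) :=
    ⟨fun h => by simpa [Set.preimage_image_eq _ f.injective] using h.preimage_relEmbedding f,
      fun h => h.image f⟩
  rw [orderComplexEulerChar, map_eq_image, powerset_image, filter_image,
    sum_image fun C _ D _ h => image_injective f.toEmbedding.injective h, orderComplexEulerChar]
  refine sum_congr (filter_congr fun C _ => ?_) fun C _ => ?_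
  · simp [hchain]
  · rw [card_image_of_injective _ f.toEmbedding.injective]

theorem eulerCharOn_eq_orderComplexEulerChar (H : SimpleGraph α)
    (hH : ∀ x y, H.Adj x y ↔ x < y ∨ y < x) (A : Finset α) :
    eulerCharOn H A = orderComplexEulerChar A := by
  have hadj : ∀ x y, x ≠ y → (H.Adj x y ↔ x ≤ y ∨ y ≤ x) := fun x y hxy => by
    rw [hH, lt_iff_le_and_ne, lt_iff_le_and_ne]
    exact ⟨Or.imp And.left And.left, Or.imp (⟨·, hxy⟩) (⟨·, hxy.symm⟩)⟩
  refine sum_congr (filter_congr fun C _ => and_congr_right fun _ => ?_) fun _ _ => rfl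
  exact forall₂_congr fun x _ => forall₂_congr fun y _ => forall_congr' fun hxy => hadj x y hxy

end OrderComplex

theorem one_sub_orderComplexEulerChar_Ioo_empty {V : Type*} [DecidableEq V] {s : Finset V}
    (hs : s.Nonempty) :
    1 - orderComplexEulerChar (Ioo ∅ s) = (-1) ^ (s.card - 1) := by
  induction s using Finset.strongInduction with
  | H s ih =>
    have hfaces : ∑ t ∈ Ioo ∅ s, (1 - orderComplexEulerChar ((Ioo ∅ s).filter (· < t)))
        = -∑ t ∈ Ioo ∅ s, (-1 : ℤ) ^ t.card := by
      rw [← sum_neg_distrib]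
      refine sum_congr rfl fun t ht => ?_
      rw [mem_Ioo] at ht
      rw [Ioo_filter_lt_of_le ht.2.le, ih t ht.2 (empty_ssubset.1 ht.1),
        neg_one_pow_sub_one (empty_ssubset.1 ht.1).card_ne_zero]
    rw [orderComplexEulerChar_eq_sum, hfaces, sum_Ioo_empty_neg_one_pow_card hs,
      neg_one_pow_sub_one hs.card_ne_zero]
    ring

lemma cliquesOn_filter_lt_eq_Ioo {V : Type*} [DecidableEq V] {G : SimpleGraph V} {A s : Finset V}
    (hs : s ∈ cliquesOn G A) : (cliquesOn G A).filter (· < s) = Ioo ∅ s := by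
  simp only [cliquesOn, mem_filter, mem_powerset] at hs
  ext t
  simp only [cliquesOn, mem_filter, mem_powerset, mem_Ioo, empty_ssubset]
  refine ⟨fun ⟨⟨_, hne, _⟩, hts⟩ => ⟨hne, hts⟩, fun ⟨hne, hts⟩ => ⟨⟨?_, hne, ?_⟩, hts⟩⟩
  · exact hts.subset.trans hs.1
  · exact hs.2.2.subset (coe_subset.2 hts.subset)

/-- The Euler characteristic of the Barycentric refinement of `G` equals the
Euler characteristic of `G`. -/
theorem eulerChar_barycentric {V : Type*} [Fintype V] (G : SimpleGraph V) :
    eulerChar (barycentric G) = eulerChar G := by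
  let IsNonemptyClique (s : Finset V) : Prop := s.Nonempty ∧ G.IsClique (s : Set V)
  have hcliques : univ.map (Function.Embedding.subtype IsNonemptyClique) = cliquesOn G univ := by
    ext s
    simp [IsNonemptyClique, cliquesOn]
  calc eulerChar (barycentric G)
      = orderComplexEulerChar (univ : Finset (Subtype IsNonemptyClique)) :=
        eulerCharOn_eq_orderComplexEulerChar _ (fun _ _ => Iff.rfl) _
    _ = orderComplexEulerChar (cliquesOn G univ) := by
        rw [← hcliques, ← orderComplexEulerChar_map (OrderEmbedding.subtype IsNonemptyClique)]
        rfl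
    _ = ∑ s ∈ cliquesOn G univ, (-1) ^ (s.card - 1) := by
        rw [orderComplexEulerChar_eq_sum]
        refine sum_congr rfl fun s hs => ?_
        rw [cliquesOn_filter_lt_eq_Ioo hs]
        exact one_sub_orderComplexEulerChar_Ioo_empty (mem_filter.1 hs).2.1
end

section
/- For every nonempty finite simple graph G, the topological (Lebesgue covering) dimension of the graph topology of G equals the maximal dimension of G, i.e. the clique number of G minus 1. -/
open Finset
open scoped Classical

/-- The points of the graph topology of `G`: the cliques of `G`. -/
abbrev CliquePt {V : Type*} (G : SimpleGraph V) :=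
  {s : Finset V // s.Nonempty ∧ G.IsClique (s : Set V)}

/-- The graph topology on the set of cliques of `G`, generated by the stars
`U(x) = {y : x ⊆ y}`. -/
noncomputable def graphTopology {V : Type*} (G : SimpleGraph V) :
    TopologicalSpace (CliquePt G) :=
  TopologicalSpace.generateFrom
    {U | ∃ x : CliquePt G, U = {y : CliquePt G | x.1 ⊆ y.1}}

/-- star of a vertex -/
def starS {V : Type*} (G : SimpleGraph V) (v : V) : Set (CliquePt G) :=
  {y : CliquePt G | ({v} : Finset V) ⊆ y.1}

def singPt {V : Type*} (G : SimpleGraph V) (v : V) : CliquePt G :=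
  ⟨{v}, Finset.singleton_nonempty v, by simp⟩

lemma starS_open {V : Type*} (G : SimpleGraph V) (v : V) :
    TopologicalSpace.GenerateOpen
      {U | ∃ x : CliquePt G, U = {y : CliquePt G | x.1 ⊆ y.1}} (starS G v) :=
  TopologicalSpace.GenerateOpen.basic _ ⟨singPt G v, rfl⟩

lemma starS_inj {V : Type*} (G : SimpleGraph V) : Function.Injective (starS G) := by
  intro v w h
  have : singPt G v ∈ starS G w := by
    rw [← h]; exact Finset.Subset.refl _
  have h2 : w = v := by simpa [starS, singPt] using this
  exact h2.symm

lemma open_upset {V : Type*} {G : SimpleGraph V} {U : Set (CliquePt G)}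
    (h : TopologicalSpace.GenerateOpen
      {U | ∃ x : CliquePt G, U = {y : CliquePt G | x.1 ⊆ y.1}} U) :
    ∀ p ∈ U, ∀ q : CliquePt G, p.1 ⊆ q.1 → q ∈ U := by
  induction h with
  | basic s hs =>
      obtain ⟨x, rfl⟩ := hs
      exact fun p hp q hq => Finset.Subset.trans hp hq
  | univ => exact fun p _ q _ => Set.mem_univ q
  | inter s t _ _ ihs iht =>
      exact fun p hp q hq => ⟨ihs p hp.1 q hq, iht p hp.2 q hq⟩
  | sUnion S _ ih =>
      rintro p ⟨s, hs, hp⟩ q hq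
      exact ⟨s, hs, ih s hs p hp q hq⟩


/-- For a nonempty finite simple graph, the Lebesgue covering dimension of the
graph topology (the least `n` such that every open cover admits an open
refinement in which no point lies in more than `n+1` sets) equals the maximal
dimension of `G`, i.e. the clique number minus one. -/
theorem covering_dimension_eq_maximal_dimension {V : Type*} [Fintype V]
    (G : SimpleGraph V) (hne : Nonempty V) :
    letI : TopologicalSpace (CliquePt G) := graphTopology G
    IsLeast {n : ℕ |
      ∀ 𝒰 : Set (Set (CliquePt G)), (∀ U ∈ 𝒰, IsOpen U) → ⋃₀ 𝒰 = Set.univ →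
        ∃ 𝒱 : Set (Set (CliquePt G)), (∀ W ∈ 𝒱, IsOpen W) ∧ ⋃₀ 𝒱 = Set.univ ∧
          (∀ W ∈ 𝒱, ∃ U ∈ 𝒰, W ⊆ U) ∧
          ∀ p : CliquePt G, Set.ncard {W ∈ 𝒱 | p ∈ W} ≤ n + 1}
      ((cliquesOn G Finset.univ).sup Finset.card - 1) := by
  letI : TopologicalSpace (CliquePt G) := graphTopology G
  set ω := (cliquesOn G Finset.univ).sup Finset.card with hω
  obtain ⟨v0⟩ := hne
  have hmemcl : ∀ p : CliquePt G, p.1 ∈ cliquesOn G Finset.univ := by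
    intro p
    simp [cliquesOn, Finset.mem_filter, Finset.mem_powerset]
    exact ⟨p.2.1, p.2.2⟩
  have hcard_le : ∀ p : CliquePt G, p.1.card ≤ ω :=
    fun p => Finset.le_sup (hmemcl p)
  have hω1 : 1 ≤ ω := by
    have := hcard_le (singPt G v0)
    simpa [singPt] using this
  have hωsucc : ω - 1 + 1 = ω := Nat.succ_pred_eq_of_pos hω1
  have hopen : ∀ v : V, IsOpen (starS G v) := fun v => starS_open G v
  have hups : ∀ U : Set (CliquePt G), IsOpen U →
      ∀ p ∈ U, ∀ q : CliquePt G, p.1 ⊆ q.1 → q ∈ U := fun U h => open_upset h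
  constructor
  · -- membership
    intro 𝒰 hUo hUc
    refine ⟨{W | ∃ v : V, W = starS G v}, ?_, ?_, ?_, ?_⟩
    · rintro W ⟨v, rfl⟩; exact hopen v
    · ext p
      simp only [Set.mem_sUnion, Set.mem_univ, iff_true]
      obtain ⟨v, hv⟩ := p.2.1
      exact ⟨starS G v, ⟨v, rfl⟩, Finset.singleton_subset_iff.2 hv⟩
    · rintro W ⟨v, rfl⟩
      have : singPt G v ∈ ⋃₀ 𝒰 := hUc ▸ Set.mem_univ _
      obtain ⟨U, hU, hvU⟩ := this
      refine ⟨U, hU, fun y hy => hups U (hUo U hU) _ hvU y hy⟩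
    · intro p
      have hsub : {W ∈ {W | ∃ v : V, W = starS G v} | p ∈ W}
          ⊆ (starS G) '' (↑p.1 : Set V) := by
        rintro W ⟨⟨v, rfl⟩, hpW⟩
        exact ⟨v, Finset.singleton_subset_iff.1 hpW, rfl⟩
      calc Set.ncard {W ∈ {W | ∃ v : V, W = starS G v} | p ∈ W}
          ≤ Set.ncard ((starS G) '' (↑p.1 : Set V)) :=
            Set.ncard_le_ncard hsub ((p.1.finite_toSet).image _)
        _ = Set.ncard (↑p.1 : Set V) :=
            Set.ncard_image_of_injective _ (starS_inj G)
        _ = p.1.card := Set.ncard_coe_finset _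
        _ ≤ ω := hcard_le p
        _ = ω - 1 + 1 := hωsucc.symm
  · -- lower bound
    intro n hn
    obtain ⟨m, hm, hmcard⟩ :=
      Finset.exists_mem_eq_sup (cliquesOn G Finset.univ)
        ⟨{v0}, hmemcl (singPt G v0)⟩ Finset.card
    simp only [cliquesOn, Finset.mem_filter, Finset.mem_powerset] at hm
    set mPt : CliquePt G := ⟨m, hm.2⟩ with hmPt
    obtain ⟨𝒱, hVo, hVc, hVref, hVmult⟩ :=
      hn {W | ∃ v : V, W = starS G v}
        (by rintro W ⟨v, rfl⟩; exact hopen v)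
        (by
          ext p
          simp only [Set.mem_sUnion, Set.mem_univ, iff_true]
          obtain ⟨v, hv⟩ := p.2.1
          exact ⟨starS G v, ⟨v, rfl⟩, Finset.singleton_subset_iff.2 hv⟩)
    have key : ∀ v ∈ m, starS G v ∈ 𝒱 := by
      intro v hv
      have : singPt G v ∈ ⋃₀ 𝒱 := hVc ▸ Set.mem_univ _
      obtain ⟨W, hW, hvW⟩ := this
      obtain ⟨U, ⟨u, rfl⟩, hWU⟩ := hVref W hW
      have huv : u = v := by
        have := hWU hvW
        simpa [starS, singPt] using this
      have h1 : W ⊆ starS G v := huv ▸ hWU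
      have h2 : starS G v ⊆ W := by
        intro y hy
        exact hups W (hVo W hW) _ hvW y hy
      have : W = starS G v := Set.Subset.antisymm h1 h2
      exact this ▸ hW
    have himg : (starS G) '' (↑m : Set V) ⊆ {W ∈ 𝒱 | mPt ∈ W} := by
      rintro W ⟨v, hv, rfl⟩
      exact ⟨key v hv, Finset.singleton_subset_iff.2 hv⟩
    have hge : ω ≤ Set.ncard {W ∈ 𝒱 | mPt ∈ W} := by
      calc ω = m.card := hmcard
        _ = Set.ncard (↑m : Set V) := (Set.ncard_coe_finset _).symm
        _ = Set.ncard ((starS G) '' (↑m : Set V)) :=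
            (Set.ncard_image_of_injective _ (starS_inj G)).symm
        _ ≤ Set.ncard {W ∈ 𝒱 | mPt ∈ W} :=
            Set.ncard_le_ncard himg (Set.toFinite _)
    have := le_trans hge (hVmult mPt)
    omega
end

section
/- For all nonempty finite simple graphs G and H, the Lusternik–Schnirelmann category of the strong (Shannon) product satisfies cat(G * H) ≤ cat(G) · cat(H). -/
open Finset
open scoped Classical

/-- The Lusternik–Schnirelmann category of `G`: the minimal number `k` of
contractible subgraphs `U_1, …, U_k` of `G` covering all vertices and all
edges of `G`. -/
noncomputable def lsCat {V : Type*} [Fintype V] (G : SimpleGraph V) : ℕ :=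
  sInf {k : ℕ | ∃ U : Fin k → G.Subgraph,
    (∀ j, IsContractible (U j).spanningCoe (U j).verts.toFinset) ∧
    (∀ v : V, ∃ j, v ∈ (U j).verts) ∧
    (∀ v w : V, G.Adj v w → ∃ j, (U j).Adj v w)}

/-- The strong (Shannon) product of two finite simple graphs: two distinct
pairs are adjacent iff each coordinate is equal or adjacent. -/
def strongProd {V W : Type*} (G : SimpleGraph V) (H : SimpleGraph W) :
    SimpleGraph (V × W) where
  Adj p q := p ≠ q ∧ (p.1 = q.1 ∨ G.Adj p.1 q.1) ∧ (p.2 = q.2 ∨ H.Adj p.2 q.2)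
  symm := by
    constructor
    rintro p q ⟨hne, h1, h2⟩
    refine ⟨hne.symm, ?_, ?_⟩
    · rcases h1 with h | h
      · exact Or.inl h.symm
      · exact Or.inr h.symm
    · rcases h2 with h | h
      · exact Or.inl h.symm
      · exact Or.inr h.symm
  loopless := by
    constructor
    rintro p ⟨hne, _, _⟩
    exact hne rfl

/-!
If `A` and `B` are contractible, so is `A ×ˢ B` in the strong product. Induct on the contraction
of `A`: when `A` is contracted at `v` with link `S`, attach the fibre `{v} ×ˢ B` to
`(A.erase v) ×ˢ B` along the contraction of `B`. The link of `(v, w)` is `S ×ˢ N ∪ {v} ×ˢ S(w)`,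
where `N`, the closed neighbourhood of `w` in `B`, is a cone and `S(w)` is the link of `w` in the
contraction of `B`; this set has the same shape as the one being built, with `S` in place of
`A.erase v`, so the attaching step is an induction of its own. Products of the pieces of two
minimal covers of `G` and `H` then cover the strong product.
-/

open SimpleGraph

section

variable {V V' W : Type*}

lemma strongProd_mono {G G' : SimpleGraph V} {H H' : SimpleGraph W} (hG : G ≤ G') (hH : H ≤ H') :
    strongProd G H ≤ strongProd G' H' :=
  fun _ _ ⟨hne, h₁, h₂⟩ => ⟨hne, h₁.imp_right (@hG _ _), h₂.imp_right (@hH _ _)⟩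

lemma strongProd_adj {G : SimpleGraph V} {H : SimpleGraph W} {p q : V × W} :
    (strongProd G H).Adj p q ↔
      p ≠ q ∧ (p.1 = q.1 ∨ G.Adj p.1 q.1) ∧ (p.2 = q.2 ∨ H.Adj p.2 q.2) :=
  Iff.rfl

lemma strongProd_adj_mk_left {G : SimpleGraph V} {H : SimpleGraph W} {v : V} {x y : W} :
    (strongProd G H).Adj (v, x) (v, y) ↔ H.Adj x y := by
  simp only [strongProd_adj, ne_eq, Prod.mk.injEq, true_and, true_or]
  exact ⟨fun ⟨hne, h⟩ => h.resolve_left hne, fun h => ⟨h.ne, Or.inr h⟩⟩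

namespace IsContractible

variable {G : SimpleGraph V}

theorem map {G' : SimpleGraph V'} (f : V ↪ V') {A : Finset V} (h : IsContractible G A)
    (hf : ∀ x ∈ A, ∀ y ∈ A, G'.Adj (f x) (f y) ↔ G.Adj x y) :
    IsContractible G' (A.map f) := by
  induction h with
  | single v => rw [map_singleton]; exact .single (f v)
  | @step A v hv _ _ ihS ihR =>
    refine .step (f v) (mem_map_of_mem f hv) ?_ ?_
    · have hlink : (A.map f).filter (fun w => G'.Adj (f v) w) =
          (A.filter fun w => G.Adj v w).map f := by
        rw [filter_map]
        exact congrArg _ (filter_congr fun x hx => hf v hv x hx)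
      rw [hlink]
      exact ihS fun x hx y hy => hf x (filter_subset _ _ hx) y (filter_subset _ _ hy)
    · rw [← map_erase]
      exact ihR fun x hx y hy => hf x (erase_subset _ _ hx) y (erase_subset _ _ hy)

theorem congr_adj {G' : SimpleGraph V} {A : Finset V} (h : IsContractible G A)
    (hA : ∀ x ∈ A, ∀ y ∈ A, G'.Adj x y ↔ G.Adj x y) : IsContractible G' A := by
  simpa using h.map (Function.Embedding.refl V) hA

-- The constructor `step` is stated with the classical `DecidableEq` instance, which differs from
-- the one found on product types.
theorem of_link_of_erase [DecidableEq V] {A : Finset V} (v : V) (hv : v ∈ A)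
    (hS : IsContractible G (A.filter fun w => G.Adj v w))
    (hrest : IsContractible G (A.erase v)) : IsContractible G A :=
  .step v hv hS (by convert hrest)

theorem insert_of_forall_adj {c : V} (D : Finset V) (hc : ∀ x ∈ D, G.Adj c x) :
    IsContractible G (insert c D) := by
  induction D using Finset.strongInduction with
  | H D ih =>
    obtain rfl | ⟨x, hx⟩ := D.eq_empty_or_nonempty
    · exact .single c
    refine .step x (mem_insert_of_mem hx) ?_ ?_
    · rw [filter_insert, if_pos (hc x hx).symm]
      exact ih _ (filter_ssubset.2 ⟨x, hx, G.irrefl⟩) fun y hy => hc y (filter_subset _ _ hy)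
    · rw [erase_insert_of_ne (hc x hx).ne]
      exact ih _ (erase_ssubset hx) fun y hy => hc y (erase_subset _ _ hy)

end IsContractible

section StrongProd

variable {G : SimpleGraph V} {H : SimpleGraph W}

lemma filter_strongProd_adj_product_union {X : Finset V} {B T : Finset W} {v : V} {w : W}
    (hv : v ∉ X) (hw : w ∈ B) :
    (X ×ˢ B ∪ {v} ×ˢ T).filter (fun q => (strongProd G H).Adj (v, w) q) =
      (X.filter fun x => G.Adj v x) ×ˢ insert w (B.filter fun y => H.Adj w y) ∪
        {v} ×ˢ (T.filter fun y => H.Adj w y) := by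
  ext ⟨x, y⟩
  simp only [mem_filter, mem_union, mem_product, mem_singleton, mem_insert, strongProd_adj]
  grind [G.irrefl, G.ne_of_adj, H.ne_of_adj]

lemma erase_product_union {X : Finset V} {B T : Finset W} {v : V} {w : W} (hv : v ∉ X) :
    (X ×ˢ B ∪ {v} ×ˢ T).erase (v, w) = X ×ˢ B ∪ {v} ×ˢ T.erase w := by
  ext ⟨x, y⟩
  simp only [mem_erase, mem_union, mem_product, mem_singleton]
  grind

namespace IsContractible

theorem singleton_product (v : V) {B : Finset W} (hB : IsContractible H B) :
    IsContractible (strongProd G H) ({v} ×ˢ B) := by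
  rw [Finset.singleton_product]
  exact hB.map _ fun _ _ _ _ => strongProd_adj_mk_left

theorem product_union_singleton_product {v : V} {T : Finset W} (hT : IsContractible H T)
    {X : Finset V} {B : Finset W} (hv : v ∉ X) (hTB : T ⊆ B)
    (hXB : IsContractible (strongProd G H) (X ×ˢ B))
    (hlink : ∀ C, IsContractible H C →
      IsContractible (strongProd G H) ((X.filter fun x => G.Adj v x) ×ˢ C)) :
    IsContractible (strongProd G H) (X ×ˢ B ∪ {v} ×ˢ T) := by
  induction hT generalizing X B with
  | single w =>
    have hw : w ∈ B := hTB (mem_singleton_self w)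
    refine .of_link_of_erase (v, w) (by simp) ?_ ?_
    · rw [filter_strongProd_adj_product_union hv hw, filter_singleton, if_neg H.irrefl,
        product_empty, union_empty]
      exact hlink _ (insert_of_forall_adj _ fun y hy => (mem_filter.1 hy).2)
    · rwa [erase_product_union hv, erase_singleton, product_empty, union_empty]
  | @step T w hw _ _ ihS ihR =>
    refine .of_link_of_erase (v, w) (by simp [hw]) ?_ ?_
    · rw [filter_strongProd_adj_product_union hv (hTB hw)]
      refine ihS (fun h => G.irrefl (mem_filter.1 h).2)
        ((filter_subset_filter _ hTB).trans (subset_insert _ _))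
        (hlink _ (insert_of_forall_adj _ fun y hy => (mem_filter.1 hy).2)) ?_
      simpa only [filter_filter, and_self] using hlink
    · rw [erase_product_union hv]
      exact ihR hv ((erase_subset _ _).trans hTB) hXB hlink

theorem product {A : Finset V} {B : Finset W} (hA : IsContractible G A)
    (hB : IsContractible H B) : IsContractible (strongProd G H) (A ×ˢ B) := by
  induction hA generalizing B with
  | single v => exact singleton_product v hB
  | @step A v hv _ _ ihS ihR =>
    have hlink : (A.erase v).filter (fun x => G.Adj v x) = A.filter fun x => G.Adj v x := by
      rw [filter_erase, erase_eq_of_notMem fun h => G.irrefl (mem_filter.1 h).2]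
    have h := product_union_singleton_product hB (notMem_erase v A) Subset.rfl (ihR hB)
      fun C hC => hlink ▸ ihS hC
    rwa [← union_product, union_comm, ← insert_eq, insert_erase hv] at h

end IsContractible

end StrongProd

structure IsCatCover (G : SimpleGraph V) [Fintype V] {ι : Type*} (U : ι → G.Subgraph) :
    Prop where
  contractible (j : ι) : IsContractible (U j).spanningCoe (U j).verts.toFinset
  exists_mem_verts (v : V) : ∃ j, v ∈ (U j).verts
  exists_adj (v w : V) : G.Adj v w → ∃ j, (U j).Adj v w

section Cover

variable [Fintype V] {G : SimpleGraph V}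

lemma lsCat_eq_sInf : lsCat G = sInf {k | ∃ U : Fin k → G.Subgraph, IsCatCover G U} := by
  refine congrArg sInf (Set.ext fun k => exists_congr fun U => ?_)
  exact ⟨fun ⟨h₁, h₂, h₃⟩ => ⟨h₁, h₂, h₃⟩, fun ⟨h₁, h₂, h₃⟩ => ⟨h₁, h₂, h₃⟩⟩

namespace IsCatCover

variable {ι κ : Type*} {U : ι → G.Subgraph}

theorem comp_equiv (hU : IsCatCover G U) (e : κ ≃ ι) : IsCatCover G (U ∘ e) where
  contractible j := hU.contractible (e j)
  exists_mem_verts v :=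
    let ⟨j, hj⟩ := hU.exists_mem_verts v
    ⟨e.symm j, by simpa⟩
  exists_adj v w h :=
    let ⟨j, hj⟩ := hU.exists_adj v w h
    ⟨e.symm j, by simpa⟩

theorem lsCat_le [Fintype ι] (hU : IsCatCover G U) : lsCat G ≤ Fintype.card ι := by
  rw [lsCat_eq_sInf]
  exact Nat.sInf_le ⟨_, hU.comp_equiv (Fintype.equivFin ι).symm⟩

theorem exists_of_eq_or_adj (hU : IsCatCover G U) {v w : V} (h : v = w ∨ G.Adj v w) :
    ∃ j, v ∈ (U j).verts ∧ w ∈ (U j).verts ∧ (v = w ∨ (U j).Adj v w) := by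
  rcases h with rfl | h
  · obtain ⟨j, hj⟩ := hU.exists_mem_verts v
    exact ⟨j, hj, hj, Or.inl rfl⟩
  · obtain ⟨j, hj⟩ := hU.exists_adj v w h
    exact ⟨j, hj.fst_mem, hj.snd_mem, Or.inr hj⟩

end IsCatCover

variable (G) in
theorem isCatCover_verts_edges :
    IsCatCover G (Sum.elim G.singletonSubgraph fun p : {p : V × V // G.Adj p.1 p.2} =>
      G.subgraphOfAdj p.2) where
  contractible
    | .inl v => by
      rw [Sum.elim_inl, singletonSubgraph_verts, Set.toFinset_singleton]
      exact .single v
    | .inr ⟨(v, w), h⟩ => by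
      have hverts : (G.subgraphOfAdj h).verts.toFinset = {v, w} := by ext; simp
      rw [Sum.elim_inr, hverts]
      exact .insert_of_forall_adj {w} fun x hx => by
        rw [mem_singleton.1 hx]
        exact subgraphOfAdj_adj_self h
  exists_mem_verts v := ⟨.inl v, rfl⟩
  exists_adj v w h := ⟨.inr ⟨(v, w), h⟩, subgraphOfAdj_adj_self h⟩

variable (G) in
theorem exists_isCatCover_fin : ∃ U : Fin (lsCat G) → G.Subgraph, IsCatCover G U := by
  have hne : {k | ∃ U : Fin k → G.Subgraph, IsCatCover G U}.Nonempty :=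
    ⟨_, _, (isCatCover_verts_edges G).comp_equiv (Fintype.equivFin _).symm⟩
  rw [lsCat_eq_sInf]
  exact Nat.sInf_mem hne

end Cover

section ProductCover

variable {G : SimpleGraph V} {H : SimpleGraph W}

def SimpleGraph.Subgraph.strongProd (U : G.Subgraph) (T : H.Subgraph) :
    (_root_.strongProd G H).Subgraph :=
  (toSubgraph (_root_.strongProd U.spanningCoe T.spanningCoe)
    (strongProd_mono U.spanningCoe_le T.spanningCoe_le)).induce (U.verts ×ˢ T.verts)

variable [Fintype V] [Fintype W]

theorem IsContractible.subgraph_strongProd {U : G.Subgraph} {T : H.Subgraph}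
    (hU : IsContractible U.spanningCoe U.verts.toFinset)
    (hT : IsContractible T.spanningCoe T.verts.toFinset) :
    IsContractible (U.strongProd T).spanningCoe (U.strongProd T).verts.toFinset := by
  have hverts : (U.strongProd T).verts.toFinset = U.verts.toFinset ×ˢ T.verts.toFinset := by
    ext p
    rw [Set.mem_toFinset, mem_product, Set.mem_toFinset, Set.mem_toFinset]
    rfl
  rw [hverts]
  refine (hU.product hT).congr_adj fun p hp q hq => ?_
  simp only [mem_product, Set.mem_toFinset] at hp hq
  simp [Subgraph.strongProd, hp, hq]

theorem IsCatCover.strongProd {ι κ : Type*} {U : ι → G.Subgraph} {T : κ → H.Subgraph}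
    (hU : IsCatCover G U) (hT : IsCatCover H T) :
    IsCatCover (_root_.strongProd G H) fun j : ι × κ => (U j.1).strongProd (T j.2) where
  contractible j := (hU.contractible j.1).subgraph_strongProd (hT.contractible j.2)
  exists_mem_verts p :=
    let ⟨i, hi⟩ := hU.exists_mem_verts p.1
    let ⟨j, hj⟩ := hT.exists_mem_verts p.2
    ⟨(i, j), hi, hj⟩
  exists_adj p q h := by
    obtain ⟨hne, h₁, h₂⟩ := h
    obtain ⟨i, hp₁, hq₁, hi⟩ := hU.exists_of_eq_or_adj h₁
    obtain ⟨j, hp₂, hq₂, hj⟩ := hT.exists_of_eq_or_adj h₂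
    exact ⟨(i, j), ⟨hp₁, hp₂⟩, ⟨hq₁, hq₂⟩, hne, hi, hj⟩

end ProductCover

end

theorem lsCat_strongProd_le_general {V W : Type*} [Fintype V] [Fintype W]
    (G : SimpleGraph V) (H : SimpleGraph W) :
    lsCat (strongProd G H) ≤ lsCat G * lsCat H := by
  obtain ⟨U, hU⟩ := exists_isCatCover_fin G
  obtain ⟨T, hT⟩ := exists_isCatCover_fin H
  simpa using (hU.strongProd hT).lsCat_le

/-- For nonempty graphs, the Lusternik–Schnirelmann category of the strong
(Shannon) product satisfies `cat(G * H) ≤ cat(G) · cat(H)`. -/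
theorem lsCat_strongProd_le {V W : Type*} [Fintype V] [Fintype W]
    (G : SimpleGraph V) (H : SimpleGraph W) (hV : Nonempty V) (hW : Nonempty W) :
    lsCat (strongProd G H) ≤ lsCat G * lsCat H :=
  lsCat_strongProd_le_general G H
end

section
/- Let G be a finite simple graph, let U be a contractible subgraph of G, and let p ≥ 1. If f is a p-cochain of G with df = 0, then there exists a (p−1)-cochain g of G such that f − dg vanishes on every (p+1)-element clique of U. -/
open Finset
open scoped Classical

/-- The exterior derivative (coboundary): a `k`-cochain is encoded as a real
function on `(k+1)`-element cliques (viewed as finsets, ordered by the linear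
order of the vertices);
`df(x₀<…<x_{k+1}) = Σ_i (−1)^i f(x₀,…,x̂_i,…,x_{k+1})`. -/
noncomputable def coboundary {V : Type*} [LinearOrder V]
    (f : Finset V → ℝ) : Finset V → ℝ :=
  fun s => ∑ v ∈ s, (-1 : ℝ) ^ (s.filter (fun w => w < v)).card * f (s.erase v)

section Aux

variable {V : Type*} [LinearOrder V]

/-- The sign `(-1)^{number of elements of s smaller than v}`. -/
noncomputable def sgn (s : Finset V) (v : V) : ℝ :=
  (-1 : ℝ) ^ (s.filter (fun w => w < v)).card

lemma coboundary_eq (f : Finset V → ℝ) (s : Finset V) :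
    coboundary f s = ∑ v ∈ s, sgn s v * f (s.erase v) := rfl

lemma sgn_sq (s : Finset V) (v : V) : sgn s v * sgn s v = 1 := by
  rw [sgn, ← mul_pow]; norm_num

lemma sgn_erase_of_not_lt {s : Finset V} {x u : V} (h : ¬ x < u) :
    sgn (s.erase x) u = sgn s u := by
  unfold sgn
  rw [Finset.filter_erase, Finset.erase_eq_of_notMem
    (by simp [Finset.mem_filter, h])]

lemma sgn_erase_of_lt {s : Finset V} {x u : V} (hx : x ∈ s) (h : x < u) :
    sgn (s.erase x) u = -sgn s u := by
  unfold sgn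
  have hmem : x ∈ s.filter (fun w => w < u) := Finset.mem_filter.2 ⟨hx, h⟩
  rw [Finset.filter_erase, Finset.card_erase_of_mem hmem]
  have hpos : 0 < (s.filter (fun w => w < u)).card := Finset.card_pos.2 ⟨x, hmem⟩
  obtain ⟨m, hm⟩ : ∃ m, (s.filter (fun w => w < u)).card = m + 1 :=
    ⟨_, (Nat.succ_pred_eq_of_pos hpos).symm⟩
  rw [hm]
  simp [pow_succ]

lemma sgn_insert (v : V) (t : Finset V) : sgn (insert v t) v = sgn t v := by
  unfold sgn
  rw [Finset.filter_insert, if_neg (lt_irrefl v)]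

lemma sgn_swap {s : Finset V} {u v : V} (hu : u ∈ s) (hv : v ∈ s) (huv : u ≠ v) :
    sgn s v * sgn (s.erase v) u = -(sgn s u * sgn (s.erase u) v) := by
  rcases huv.lt_or_gt with h | h
  · rw [sgn_erase_of_not_lt (asymm h), sgn_erase_of_lt hu h]; ring
  · rw [sgn_erase_of_lt hv h, sgn_erase_of_not_lt (asymm h)]; ring

lemma coboundary_sub (f g : Finset V → ℝ) (s : Finset V) :
    coboundary (fun t => f t - g t) s = coboundary f s - coboundary g s := by
  simp [coboundary, mul_sub, Finset.sum_sub_distrib]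

lemma coboundary_add (f g : Finset V → ℝ) (s : Finset V) :
    coboundary (fun t => f t + g t) s = coboundary f s + coboundary g s := by
  simp [coboundary, mul_add, Finset.sum_add_distrib]

lemma sign_solve {a b c d : ℝ} (ha : a * a = 1) (hd : d * d = 1)
    (key : a * b = -(c * d)) : b * d = -(a * c) := by
  linear_combination a * d * key - b * d * ha - a * c * hd

lemma coboundary_coboundary (g : Finset V → ℝ) (s : Finset V) :
    coboundary (coboundary g) s = 0 := by
  have hrw : coboundary (coboundary g) s =
      ∑ v ∈ s, ∑ u ∈ s.erase v,
        sgn s v * (sgn (s.erase v) u * g ((s.erase v).erase u)) := by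
    rw [coboundary_eq]
    exact Finset.sum_congr rfl (fun v _ => by rw [coboundary_eq, Finset.mul_sum])
  rw [hrw, Finset.sum_sigma']
  refine Finset.sum_involution (fun p _ => ⟨p.2, p.1⟩) ?_ ?_ ?_ ?_
  · rintro ⟨v, u⟩ hp
    obtain ⟨hv, hu'⟩ := Finset.mem_sigma.1 hp
    have hu : u ∈ s := Finset.mem_of_mem_erase hu'
    have hne : u ≠ v := Finset.ne_of_mem_erase hu'
    have key := sgn_swap hu hv hne
    have he : (s.erase u).erase v = (s.erase v).erase u := Finset.erase_right_comm
    simp only [he]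
    linear_combination g ((s.erase v).erase u) * key
  · rintro ⟨v, u⟩ hp _ heq
    obtain ⟨hv, hu'⟩ := Finset.mem_sigma.1 hp
    exact Finset.ne_of_mem_erase hu' (congrArg Sigma.fst heq)
  · rintro ⟨v, u⟩ hp
    obtain ⟨hv, hu'⟩ := Finset.mem_sigma.1 hp
    exact Finset.mem_sigma.2 ⟨Finset.mem_of_mem_erase hu',
      Finset.mem_erase.2 ⟨(Finset.ne_of_mem_erase hu').symm, hv⟩⟩
  · rintro ⟨v, u⟩ _; rfl

lemma coboundary_singleton (g : Finset V → ℝ) (x : V) :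
    coboundary g {x} = g ∅ := by
  simp [coboundary, Finset.filter_singleton]

lemma coboundary_pair {a b : V} (h : a < b) (f : Finset V → ℝ) :
    coboundary f {a, b} = f {b} - f {a} := by
  have e1 : ({a, b} : Finset V).erase a = {b} := by
    rw [show ({a, b} : Finset V) = insert a {b} from rfl,
      Finset.erase_insert (by simp [h.ne])]
  have e2 : ({a, b} : Finset V).erase b = {a} := by
    rw [show ({a, b} : Finset V) = insert a {b} from rfl,
      Finset.erase_insert_of_ne h.ne, Finset.erase_singleton]
    simp
  have s1 : sgn ({a, b} : Finset V) a = 1 := by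
    unfold sgn
    rw [show ({a, b} : Finset V) = insert a {b} from rfl, Finset.filter_insert,
      if_neg (lt_irrefl a), Finset.filter_singleton, if_neg (asymm h)]
    simp
  have s2 : sgn ({a, b} : Finset V) b = -1 := by
    unfold sgn
    rw [show ({a, b} : Finset V) = insert a {b} from rfl, Finset.filter_insert,
      if_pos h, Finset.filter_singleton, if_neg (lt_irrefl b)]
    simp
  rw [coboundary_eq, Finset.sum_pair h.ne, e1, e2, s1, s2]
  ring

lemma pair_eq {a b : V} (hab : a ≠ b) (f : Finset V → ℝ)
    (h0 : coboundary f {a, b} = 0) : f {a} = f {b} := by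
  rcases hab.lt_or_gt with h | h
  · have := coboundary_pair h f
    rw [h0] at this; linarith
  · have := coboundary_pair h f
    rw [Finset.pair_comm b a, h0] at this; linarith

lemma IsContractible.nonempty {H : SimpleGraph V} {A : Finset V}
    (h : IsContractible H A) : A.Nonempty := by
  cases h with
  | single v => exact ⟨v, Finset.mem_singleton_self v⟩
  | step v hv _ _ => exact ⟨v, hv⟩

/-- Main induction: on a contractible vertex set, every cocycle (of any degree)
is a coboundary. -/
lemma main_induction (H : SimpleGraph V) (n : ℕ) :
    ∀ A : Finset V, A.card ≤ n → IsContractible H A →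
    ∀ (q : ℕ) (f : Finset V → ℝ),
      (∀ s : Finset V, s.card = q + 2 → s ⊆ A → H.IsClique (s : Set V) →
        coboundary f s = 0) →
      ∃ g : Finset V → ℝ, ∀ s : Finset V, s.card = q + 1 → s ⊆ A →
        H.IsClique (s : Set V) → f s - coboundary g s = 0 := by
  induction n with
  | zero =>
    intro A hA hU
    obtain ⟨v, hv⟩ := hU.nonempty
    have : A.card ≠ 0 := Finset.card_ne_zero_of_mem hv
    omega
  | succ n IH =>
    intro A hA hU q f hf
    cases hU with
    | single v =>
      cases q with
      | zero =>
        refine ⟨fun _ => f {v}, ?_⟩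
        intro s hcard hsub _
        have hs : s = {v} := Finset.eq_of_subset_of_card_le hsub (by simp [hcard])
        subst hs
        rw [coboundary_singleton]
        simp
      | succ q' =>
        refine ⟨0, ?_⟩
        intro s hcard hsub _
        have := Finset.card_le_card hsub
        rw [hcard, Finset.card_singleton] at this
        omega
    | step v hv hS hrest =>
      set S := A.filter (fun w => H.Adj v w) with hSdef
      set B := A.erase v with hBdef
      have hvS : v ∉ S := fun hmem => H.irrefl (Finset.mem_filter.1 hmem).2
      have hSsubA : S ⊆ A := Finset.filter_subset _ _
      have hSB : S ⊆ B := fun x hx => Finset.mem_erase.2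
        ⟨(Finset.mem_filter.1 hx).2.ne', (Finset.mem_filter.1 hx).1⟩
      have hBA : B ⊆ A := Finset.erase_subset _ _
      have hBcard : B.card ≤ n := by
        rw [hBdef, Finset.card_erase_of_mem hv]; omega
      have hScard : S.card ≤ n := le_trans (Finset.card_le_card hSB) hBcard
      obtain ⟨g₀, hg₀⟩ := IH B hBcard (by rw [hBdef]; convert hrest using 2) q f
        (fun s hc hsub hclq => hf s hc (hsub.trans hBA) hclq)
      set h : Finset V → ℝ := fun s => f s - coboundary g₀ s with hhdef
      have hB0 : ∀ s : Finset V, s.card = q + 1 → s ⊆ B → H.IsClique (s : Set V) →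
          h s = 0 := hg₀
      have hdh : ∀ s : Finset V, s.card = q + 2 → s ⊆ A → H.IsClique (s : Set V) →
          coboundary h s = 0 := by
        intro s hc hsub hclq
        rw [hhdef, coboundary_sub, coboundary_coboundary, hf s hc hsub hclq]
        ring
      cases q with
      | zero =>
        refine ⟨g₀, ?_⟩
        intro s hcard hsub hclq
        by_cases hvs : v ∈ s
        · obtain ⟨a, ha⟩ := Finset.card_eq_one.1 hcard
          have hav : a = v := by
            rw [ha] at hvs; exact (Finset.mem_singleton.1 hvs).symm
          rw [hav] at ha
          obtain ⟨u, huS⟩ := hS.nonempty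
          have huA : u ∈ A := (Finset.mem_filter.1 huS).1
          have hadj : H.Adj v u := (Finset.mem_filter.1 huS).2
          have hne : v ≠ u := hadj.ne
          have hpair : coboundary f {v, u} = 0 := by
            refine hf _ (Finset.card_pair hne) ?_ ?_
            · exact Finset.insert_subset hv (Finset.singleton_subset_iff.2 huA)
            · rw [Finset.coe_insert, Finset.coe_singleton]
              exact SimpleGraph.isClique_pair.2 (fun _ => hadj)
          have hfv : f {v} = f {u} := pair_eq hne f hpair
          have hu1 : f {u} - coboundary g₀ {u} = 0 := by
            refine hB0 {u} (by simp) ?_ ?_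
            · exact Finset.singleton_subset_iff.2
                (Finset.mem_erase.2 ⟨hadj.ne', huA⟩)
            · rw [Finset.coe_singleton]; exact SimpleGraph.isClique_singleton u
          rw [ha, coboundary_singleton]
          rw [coboundary_singleton] at hu1
          rw [hfv]; exact hu1
        · exact hB0 s hcard
            (fun x hx => Finset.mem_erase.2 ⟨fun e => hvs (e ▸ hx), hsub hx⟩) hclq
      | succ q' =>
        set K : Finset V → ℝ := fun t => sgn t v * h (insert v t) with hKdef
        have hKcocycle : ∀ s : Finset V, s.card = q' + 2 → s ⊆ S →
            H.IsClique (s : Set V) → coboundary K s = 0 := by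
          intro s hcS hsubS hclq
          have hvns : v ∉ s := fun hmem => hvS (hsubS hmem)
          set s' := insert v s with hs'def
          have hclq' : H.IsClique (s' : Set V) := by
            rw [hs'def, Finset.coe_insert]
            exact hclq.insert (fun b hb _ =>
              (Finset.mem_filter.1 (hsubS (Finset.mem_coe.1 hb))).2)
          have hsubA' : s' ⊆ A := Finset.insert_subset hv (hsubS.trans hSsubA)
          have hcs' : s'.card = q' + 1 + 2 := by
            rw [hs'def, Finset.card_insert_of_notMem hvns, hcS]
          have h0 : coboundary h s' = 0 := hdh s' hcs' hsubA' hclq'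
          have herase : s'.erase v = s := Finset.erase_insert hvns
          have hhs : h s = 0 := hB0 s hcS (hsubS.trans hSB) hclq
          have hexp : coboundary h s' = sgn s' v * h (s'.erase v) +
              ∑ w ∈ s'.erase v, sgn s' w * h (s'.erase w) := by
            rw [coboundary_eq,
              ← Finset.add_sum_erase _ _ (Finset.mem_insert_self v s)]
          rw [h0, herase, hhs, mul_zero, zero_add] at hexp
          have hsum0 : ∑ w ∈ s, sgn s' w * h (s'.erase w) = 0 := hexp.symm
          rw [coboundary_eq]
          have hterm : ∀ w ∈ s, sgn s w * K (s.erase w) =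
              (-(sgn s' v)) * (sgn s' w * h (s'.erase w)) := by
            intro w hw
            have hwv : w ≠ v := fun e => hvns (e ▸ hw)
            have he : s'.erase w = insert v (s.erase w) :=
              Finset.erase_insert_of_ne hwv.symm
            have key : sgn s' v * sgn (s'.erase v) w =
                -(sgn s' w * sgn (s'.erase w) v) := sgn_swap
              (by rw [hs'def]; exact Finset.mem_insert_of_mem hw)
              (by rw [hs'def]; exact Finset.mem_insert_self v s) hwv
            have e1 : sgn s' v = sgn s v := by rw [hs'def, sgn_insert]
            have e2 : sgn (s'.erase w) v = sgn (s.erase w) v := by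
              rw [he, sgn_insert]
            rw [e1, e2, herase] at key
            have key2 := sign_solve (sgn_sq s v) (sgn_sq (s.erase w) v) key
            rw [hKdef]
            simp only
            rw [he, e1]
            linear_combination h (insert v (s.erase w)) * key2
          rw [Finset.sum_congr rfl hterm, ← Finset.mul_sum, hsum0, mul_zero]
        obtain ⟨G, hG⟩ := IH S hScard (by rw [hSdef]; exact hS) q' K hKcocycle
        set g' : Finset V → ℝ := fun r =>
          if v ∈ r ∧ r.erase v ⊆ S then -(sgn r v * G (r.erase v)) else 0
          with hg'def
        refine ⟨fun t => g₀ t + g' t, ?_⟩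
        intro s hcard hsub hclq
        have hsplit : f s - coboundary (fun t => g₀ t + g' t) s =
            h s - coboundary g' s := by
          rw [coboundary_add, hhdef]; ring
        rw [hsplit]
        by_cases hvs : v ∈ s
        · set t := s.erase v with htdef
          have htS : t ⊆ S := by
            intro x hx
            have hxs : x ∈ s := Finset.mem_of_mem_erase hx
            have hxv : x ≠ v := Finset.ne_of_mem_erase hx
            refine Finset.mem_filter.2 ⟨hsub hxs, ?_⟩
            exact hclq (Finset.mem_coe.2 hvs) (Finset.mem_coe.2 hxs) hxv.symm
          have htcard : t.card = q' + 1 := by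
            rw [htdef, Finset.card_erase_of_mem hvs, hcard]
            omega
          have htclq : H.IsClique (t : Set V) :=
            hclq.subset (Finset.coe_subset.2 (Finset.erase_subset _ _))
          have hKt : K t - coboundary G t = 0 := hG t htcard htS htclq
          have hins : insert v t = s := Finset.insert_erase hvs
          have hh : h s = sgn t v * coboundary G t := by
            have h1 : sgn t v * K t = h s := by
              rw [hKdef]
              simp only
              rw [← mul_assoc, sgn_sq, one_mul, hins]
            rw [← h1, show K t = coboundary G t from by linarith]
          have hexp2 : coboundary g' s = sgn s v * g' (s.erase v) +
              ∑ w ∈ s.erase v, sgn s w * g' (s.erase w) := by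
            rw [coboundary_eq, ← Finset.add_sum_erase _ _ hvs]
          have hg't : g' (s.erase v) = 0 := by
            rw [hg'def]
            simp only
            rw [if_neg]
            rintro ⟨h1, -⟩
            exact Finset.notMem_erase v s h1
          have hterm2 : ∀ w ∈ s.erase v, sgn s w * g' (s.erase w) =
              sgn t v * (sgn t w * G (t.erase w)) := by
            intro w hw
            have hws : w ∈ s := Finset.mem_of_mem_erase hw
            have hwv : w ≠ v := Finset.ne_of_mem_erase hw
            have hvsw : v ∈ s.erase w := Finset.mem_erase.2 ⟨hwv.symm, hvs⟩
            have he2 : (s.erase w).erase v = t.erase w := Finset.erase_right_comm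
            have hsubS2 : (s.erase w).erase v ⊆ S := by
              rw [he2]; exact (Finset.erase_subset _ _).trans htS
            have key := sgn_swap hws hvs hwv
            have hsv : sgn s v = sgn t v := by
              have := sgn_insert v t
              rw [hins] at this
              exact this
            rw [hg'def]
            simp only
            rw [if_pos ⟨hvsw, hsubS2⟩, he2]
            rw [← htdef] at key
            rw [← hsv]
            linear_combination (-(G (t.erase w))) * key
          rw [hexp2, hg't, mul_zero, zero_add, Finset.sum_congr rfl hterm2,
            ← Finset.mul_sum, hh, coboundary_eq, ← htdef]
          ring
        · have hsB : s ⊆ B := fun x hx =>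
            Finset.mem_erase.2 ⟨fun e => hvs (e ▸ hx), hsub hx⟩
          have hzero : ∀ w ∈ s, sgn s w * g' (s.erase w) = 0 := by
            intro w hw
            rw [hg'def]
            simp only
            rw [if_neg, mul_zero]
            rintro ⟨h1, -⟩
            exact hvs (Finset.mem_of_mem_erase h1)
          rw [coboundary_eq, Finset.sum_eq_zero hzero, hB0 s hcard hsB hclq]
          ring

end Aux

/-- If `U` is a contractible subgraph of `G`, `p ≥ 1`, and `f` is a `p`-cochain
of `G` with `df = 0` (on all `(p+2)`-element cliques of `G`), then there is a
`(p−1)`-cochain `g` such that `f − dg` vanishes on every `(p+1)`-element clique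
of `U`. -/
theorem cocycle_vanishes_on_contractible {V : Type*} [Fintype V] [LinearOrder V]
    (G : SimpleGraph V) (U : G.Subgraph)
    (hU : IsContractible U.spanningCoe U.verts.toFinset)
    (p : ℕ) (hp : 1 ≤ p) (f : Finset V → ℝ)
    (hf : ∀ s : Finset V, s.card = p + 2 → G.IsClique (s : Set V) →
      coboundary f s = 0) :
    ∃ g : Finset V → ℝ, ∀ s : Finset V, s.card = p + 1 →
      (s : Set V) ⊆ U.verts → U.spanningCoe.IsClique (s : Set V) →
      f s - coboundary g s = 0 := by
  obtain ⟨g, hg⟩ := main_induction U.spanningCoe U.verts.toFinset.card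
    U.verts.toFinset le_rfl hU p f
    (fun s hc _ hclq => hf s hc (hclq.mono U.spanningCoe_le))
  exact ⟨g, fun s hc hsub hclq => hg s hc (Set.subset_toFinset.2 hsub) hclq⟩
end
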